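/- Let A be a symmetric n×n real matrix, B ∈ ℝ^{n×k} with full column rank (k < n), and let E_max(A) denote the eigenspace of A for its largest eigenvalue. If E_max(A) ∩ im(B) = {0}, then the largest generalized eigenvalue of the pencil (BᵀAB, BᵀB) is strictly less than λ_max(A); i.e., max over nonzero y ∈ ℝᵏ of (yᵀBᵀABy)/(yᵀBᵀBy) < λ_max(A). -/

import Mathlib

/-!
Write `λ` for the bound `lmax` on the eigenvalues of `A`. Then `λ • 1 - A` is positive
semidefinite, and for a positive semidefinite `M` the quadratic form `xᵀ M x` vanishes only when
`M x = 0`. Hence `xᵀ A x < λ ‖x‖²` for every `x` that is not a `λ`-eigenvector of `A`, and `x = B y`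
is such a vector because `B` is injective and `im B` meets the `λ`-eigenspace trivially.
-/

open Matrix
open scoped ComplexOrder

namespace Matrix.IsHermitian

variable {n : Type*} [Fintype n] [DecidableEq n]

theorem posSemidef_smul_one_sub {𝕜 : Type*} [RCLike 𝕜] {A : Matrix n n 𝕜} (hA : A.IsHermitian)
    {c : ℝ} (hc : ∀ i, hA.eigenvalues i ≤ c) : ((c : 𝕜) • 1 - A).PosSemidef := by
  have hscalar : (c : 𝕜) • (1 : Matrix n n 𝕜) =
      Unitary.conjStarAlgAut 𝕜 _ hA.eigenvectorUnitary ((c : 𝕜) • 1) := by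
    simp
  conv => enter [1, 2]; rw [hA.spectral_theorem]
  rw [hscalar, ← map_sub, Unitary.conjStarAlgAut_apply,
    Unitary.isUnit_coe.posSemidef_star_right_conjugate_iff, smul_one_eq_diagonal, diagonal_sub,
    posSemidef_diagonal_iff]
  intro i
  rw [Function.comp_apply, ← RCLike.ofReal_sub, RCLike.ofReal_nonneg, sub_nonneg]
  exact hc i

theorem dotProduct_mulVec_lt_of_mulVec_ne {A : Matrix n n ℝ} (hA : A.IsHermitian) {c : ℝ}
    (hc : ∀ i, hA.eigenvalues i ≤ c) {x : n → ℝ} (hx : A *ᵥ x ≠ c • x) :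
    x ⬝ᵥ A *ᵥ x < c * (x ⬝ᵥ x) := by
  have hM : (c • 1 - A).PosSemidef := hA.posSemidef_smul_one_sub hc
  have hquad : x ⬝ᵥ (c • 1 - A) *ᵥ x = c * (x ⬝ᵥ x) - x ⬝ᵥ A *ᵥ x := by
    rw [sub_mulVec, smul_mulVec, one_mulVec, dotProduct_sub, dotProduct_smul, smul_eq_mul]
  have hnonneg : 0 ≤ x ⬝ᵥ (c • 1 - A) *ᵥ x := hM.dotProduct_mulVec_nonneg x
  have hne : x ⬝ᵥ (c • 1 - A) *ᵥ x ≠ 0 := by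
    have hkernel := hM.dotProduct_mulVec_zero_iff x
    rw [star_trivial] at hkernel
    rw [Ne, hkernel, sub_mulVec, smul_mulVec, one_mulVec, sub_eq_zero]
    exact Ne.symm hx
  linarith [lt_of_le_of_ne hnonneg (Ne.symm hne)]

end Matrix.IsHermitian

theorem stmt3_general {n k : ℕ}
    (A : Matrix (Fin n) (Fin n) ℝ) (hA : A.IsHermitian)
    (B : Matrix (Fin n) (Fin k) ℝ) (hB : Function.Injective B.mulVec)
    (lmax : ℝ) (hub : ∀ i, hA.eigenvalues i ≤ lmax)
    (htriv : ∀ x : Fin n → ℝ, A.mulVec x = lmax • x → (∃ y, B.mulVec y = x) → x = 0) :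
    ∀ y : Fin k → ℝ, y ≠ 0 →
      (B.mulVec y ⬝ᵥ A.mulVec (B.mulVec y)) / (B.mulVec y ⬝ᵥ B.mulVec y) < lmax := by
  intro y hy
  have hBy : B *ᵥ y ≠ 0 := fun h => hy (hB (h.trans (mulVec_zero B).symm))
  have hnorm : 0 < B *ᵥ y ⬝ᵥ B *ᵥ y := by
    simpa using dotProduct_star_self_pos_iff.mpr hBy
  have hnot_eigen : A *ᵥ B *ᵥ y ≠ lmax • B *ᵥ y := fun h => hBy (htriv _ h ⟨y, rfl⟩)
  rw [div_lt_iff₀ hnorm]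
  exact hA.dotProduct_mulVec_lt_of_mulVec_ne hub hnot_eigen

/-- If the top eigenspace of a symmetric matrix `A` intersects the column space of a
full-column-rank matrix `B` trivially, then the largest generalized eigenvalue of the
pencil `(BᵀAB, BᵀB)` is strictly less than `λ_max(A)`. -/
theorem stmt3 {n k : ℕ} (hkn : k < n)
    (A : Matrix (Fin n) (Fin n) ℝ) (hA : A.IsHermitian)
    (B : Matrix (Fin n) (Fin k) ℝ) (hB : Function.Injective B.mulVec)
    (lmax : ℝ) (hub : ∀ i, hA.eigenvalues i ≤ lmax) (hatt : ∃ i, hA.eigenvalues i = lmax)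
    (htriv : ∀ x : Fin n → ℝ, A.mulVec x = lmax • x → (∃ y, B.mulVec y = x) → x = 0) :
    ∀ y : Fin k → ℝ, y ≠ 0 →
      (B.mulVec y ⬝ᵥ A.mulVec (B.mulVec y)) / (B.mulVec y ⬝ᵥ B.mulVec y) < lmax :=
  stmt3_general A hA B hB lmax hub htriv
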